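/- Let d ≥ 1, L > 0, M > 0, ε > 0, let θ* ∈ ℝ^d with θ* ≠ 0, and let n ≥ 1. Let X_1, …, X_n be independent random vectors in ℝ^d, each of whose laws is absolutely continuous with respect to Lebesgue measure with density bounded almost everywhere by M and supported in the closed Euclidean ball of radius L. Then P(there exist i ≠ j with |⟨θ*, X_i⟩ − ⟨θ*, X_j⟩| ≤ ε) ≤ n² · M · (π^{(d−1)/2} / Γ((d+1)/2)) · L^{d−1} · (ε / ‖θ*‖₂). Equivalently, with probability at least 1 − n² M (π^{(d−1)/2}/Γ((d+1)/2)) L^{d−1} ε/‖θ*‖₂, every pair i ≠ j satisfies |⟨θ*, X_i⟩ − ⟨θ*, X_j⟩| > ε. -/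

import Mathlib

/-!
Fix a pair `i < j`. By independence, conditionally on `Xᵢ = x` the event
`|⟪θ, Xᵢ⟫ - ⟪θ, Xⱼ⟫| ≤ ε` asks `Xⱼ` to lie in a slab of width `2ε/‖θ‖` orthogonal to `θ`.
In coordinates adapted to `θ`, the part of that slab inside the ball of radius `L` is contained
in (an interval of length `2ε/‖θ‖`) × (the `(d-1)`-dimensional ball of radius `L`), so a density
bounded by `M` gives it mass at most `M · 2ε/‖θ‖ · vol B^{d-1}(L)`. A union bound over the
`n.choose 2 ≤ n²/2` unordered pairs finishes the proof.
-/

open MeasureTheory ENNReal ProbabilityTheory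

theorem MeasureTheory.withDensity_apply_le_mul_measure_inter {α : Type*} [MeasurableSpace α]
    {μ : Measure α} {f : α → ℝ≥0∞} {c : ℝ≥0∞} {K : Set α} (hK : MeasurableSet K)
    (hf : ∀ᵐ x ∂μ, f x ≤ c) (hfK : ∀ᵐ x ∂μ, f x ≠ 0 → x ∈ K) (s : Set α) :
    μ.withDensity f s ≤ c * μ (s ∩ K) := by
  have hf_le : f ≤ᵐ[μ] K.indicator fun _ ↦ c := by
    filter_upwards [hf, hfK] with x hfx hxK
    by_cases h0 : f x = 0
    · simp [h0]
    · rwa [Set.indicator_of_mem (hxK h0)]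
  calc μ.withDensity f s ≤ μ.withDensity (K.indicator fun _ ↦ c) s := withDensity_mono hf_le s
    _ = c * μ (s ∩ K) := by
      rw [withDensity_indicator hK, withDensity_const, Measure.smul_apply,
        Measure.restrict_apply' hK, smul_eq_mul]

theorem ProbabilityTheory.IndepFun.measure_preimage_le_of_forall_map_preimage_le
    {Ω α β : Type*} [MeasurableSpace Ω] [MeasurableSpace α] [MeasurableSpace β]
    {P : Measure Ω} [IsProbabilityMeasure P] {X : Ω → α} {Y : Ω → β}
    (hXY : IndepFun X Y P) (hX : Measurable X) (hY : Measurable Y)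
    {T : Set (α × β)} (hT : MeasurableSet T) {κ : ℝ≥0∞}
    (hκ : ∀ x, P.map Y (Prod.mk x ⁻¹' T) ≤ κ) :
    P ((fun ω ↦ (X ω, Y ω)) ⁻¹' T) ≤ κ := by
  have : IsProbabilityMeasure (P.map X) := Measure.isProbabilityMeasure_map hX.aemeasurable
  rw [← Measure.map_apply (hX.prodMk hY) hT,
    (indepFun_iff_map_prod_eq_prod_map_map hX.aemeasurable hY.aemeasurable).1 hXY,
    Measure.prod_apply hT]
  calc ∫⁻ x, P.map Y (Prod.mk x ⁻¹' T) ∂P.map X ≤ ∫⁻ _, κ ∂P.map X := lintegral_mono hκ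
    _ = κ := by simp

theorem MeasureTheory.measure_setOf_exists_ne_le_choose_two_mul {Ω ι : Type*} [MeasurableSpace Ω]
    [Fintype ι] [LinearOrder ι] (μ : Measure Ω) (A : ι → ι → Set Ω)
    (hA : ∀ i j, A i j = A j i) {κ : ℝ≥0∞} (hκ : ∀ i j, i < j → μ (A i j) ≤ κ) :
    μ {ω | ∃ i j, i ≠ j ∧ ω ∈ A i j} ≤ (Fintype.card ι).choose 2 * κ := by
  have hcover : {ω | ∃ i j, i ≠ j ∧ ω ∈ A i j}
      ⊆ ⋃ p ∈ (Finset.univ.filter fun p : ι × ι ↦ p.1 < p.2), A p.1 p.2 := by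
    rintro ω ⟨i, j, hij, hω⟩
    simp only [Set.mem_iUnion, Finset.mem_filter, Finset.mem_univ, true_and, exists_prop,
      Prod.exists]
    rcases hij.lt_or_gt with h | h
    · exact ⟨i, j, h, hω⟩
    · exact ⟨j, i, h, hA i j ▸ hω⟩
  calc _ ≤ _ := measure_mono hcover
    _ ≤ ∑ p ∈ (Finset.univ.filter fun p : ι × ι ↦ p.1 < p.2), μ (A p.1 p.2) :=
      measure_biUnion_finset_le _ _
    _ ≤ ∑ p ∈ (Finset.univ.filter fun p : ι × ι ↦ p.1 < p.2), κ :=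
      Finset.sum_le_sum fun p hp ↦ hκ _ _ (Finset.mem_filter.1 hp).2
    _ = _ := by rw [Finset.sum_const, Fintype.card_product_filter_lt, nsmul_eq_mul]

theorem EuclideanSpace.volume_setOf_apply_zero_mem_and_norm_le_le (k : ℕ) (I : Set ℝ) (L : ℝ) :
    volume {y : EuclideanSpace ℝ (Fin (k + 1)) | y 0 ∈ I ∧ ‖y‖ ≤ L}
      ≤ volume I * volume (Metric.closedBall (0 : EuclideanSpace ℝ (Fin k)) L) := by
  let g : EuclideanSpace ℝ (Fin (k + 1)) ≃ᵐ ℝ × EuclideanSpace ℝ (Fin k) :=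
    (MeasurableEquiv.toLp 2 _).symm.trans <|
      (MeasurableEquiv.piFinSuccAbove (fun _ ↦ ℝ) 0).trans <|
        MeasurableEquiv.prodCongr (MeasurableEquiv.refl ℝ) (MeasurableEquiv.toLp 2 _)
  have hg : MeasurePreserving g := by
    refine (PiLp.volume_preserving_ofLp _).trans ?_
    refine (volume_preserving_piFinSuccAbove (fun _ ↦ ℝ) 0).trans ?_
    rw [Measure.volume_eq_prod, Measure.volume_eq_prod]
    exact (MeasurePreserving.id _).prod (PiLp.volume_preserving_toLp _)
  have hsub : {y : EuclideanSpace ℝ (Fin (k + 1)) | y 0 ∈ I ∧ ‖y‖ ≤ L}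
      ⊆ g ⁻¹' (I ×ˢ Metric.closedBall 0 L) := by
    rintro y ⟨hy0, hyL⟩
    refine ⟨hy0, ?_⟩
    rw [mem_closedBall_zero_iff]
    refine le_trans ?_ hyL
    simp only [EuclideanSpace.norm_eq]
    refine Real.sqrt_le_sqrt ?_
    rw [Fin.sum_univ_succ]
    exact le_add_of_nonneg_left (by positivity)
  calc _ ≤ volume (g ⁻¹' (I ×ˢ Metric.closedBall 0 L)) := measure_mono hsub
    _ = _ := by rw [hg.measure_preimage_equiv, Measure.volume_eq_prod, Measure.prod_prod]

theorem EuclideanSpace.volume_closedBall_fin_eq_ofReal (k : ℕ) (x : EuclideanSpace ℝ (Fin k))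
    {r : ℝ} (hr : 0 ≤ r) :
    volume (Metric.closedBall x r)
      = ENNReal.ofReal (Real.pi ^ ((k : ℝ) / 2) / Real.Gamma ((k : ℝ) / 2 + 1) * r ^ k) := by
  rcases k.eq_zero_or_pos with rfl | hk
  · obtain rfl := Subsingleton.elim x 0
    rw [volume_euclideanSpace_eq_dirac, Measure.dirac_apply_of_mem (Metric.mem_closedBall_self hr)]
    simp
  · have : Nonempty (Fin k) := ⟨⟨0, hk⟩⟩
    rw [EuclideanSpace.volume_closedBall, Fintype.card_fin, ← ENNReal.ofReal_pow hr,
      ← ENNReal.ofReal_mul (by positivity), mul_comm, Real.sqrt_eq_rpow, ← Real.rpow_natCast,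
      ← Real.rpow_mul Real.pi_pos.le, one_div_mul_eq_div]

section InnerProductSpace

open Module

variable {E : Type*} [NormedAddCommGroup E] [InnerProductSpace ℝ E] [FiniteDimensional ℝ E]
  [MeasurableSpace E] [BorelSpace E] {k : ℕ}

theorem InnerProductSpace.volume_setOf_inner_mem_and_norm_le_le (hE : finrank ℝ E = k + 1)
    {u : E} (hu : ‖u‖ = 1) (I : Set ℝ) (L : ℝ) :
    volume {x : E | inner ℝ u x ∈ I ∧ ‖x‖ ≤ L}
      ≤ volume I * volume (Metric.closedBall (0 : EuclideanSpace ℝ (Fin k)) L) := by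
  have hu' : Orthonormal ℝ (({0} : Set (Fin (k + 1))).domRestrict fun _ ↦ u) :=
    orthonormal_subsingleton_iff.2 fun _ ↦ hu
  obtain ⟨b, hb⟩ := hu'.exists_orthonormalBasis_extension_of_card_eq (by simp [hE])
  have hS : {x : E | inner ℝ u x ∈ I ∧ ‖x‖ ≤ L}
      = b.repr ⁻¹' {y | y 0 ∈ I ∧ ‖y‖ ≤ L} := by
    ext x
    simp [b.repr_apply_apply, hb 0 rfl]
  rw [hS]
  exact (b.measurePreserving_repr.measure_preimage_le _).trans
    (EuclideanSpace.volume_setOf_apply_zero_mem_and_norm_le_le k I L)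

theorem InnerProductSpace.volume_setOf_abs_inner_sub_le_inter_closedBall_le
    (hE : finrank ℝ E = k + 1) {θ : E} (hθ : θ ≠ 0) (c ε L : ℝ) :
    volume ({x : E | |inner ℝ θ x - c| ≤ ε} ∩ Metric.closedBall 0 L)
      ≤ ENNReal.ofReal (2 * ε / ‖θ‖)
        * volume (Metric.closedBall (0 : EuclideanSpace ℝ (Fin k)) L) := by
  have hθ_pos : 0 < ‖θ‖ := norm_pos_iff.2 hθ
  have hsub : {x : E | |inner ℝ θ x - c| ≤ ε} ∩ Metric.closedBall 0 L ⊆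
      {x | inner ℝ (‖θ‖⁻¹ • θ) x ∈ Set.Icc ((c - ε) / ‖θ‖) ((c + ε) / ‖θ‖) ∧ ‖x‖ ≤ L} := by
    rintro x ⟨hx, hxL⟩
    rw [Set.mem_ofPred_eq, abs_le] at hx
    rw [mem_closedBall_zero_iff] at hxL
    rw [Set.mem_ofPred_eq, real_inner_smul_left, Set.mem_Icc, inv_mul_eq_div,
      div_le_div_iff_of_pos_right hθ_pos, div_le_div_iff_of_pos_right hθ_pos]
    exact ⟨⟨by linarith, by linarith⟩, hxL⟩
  have hunit : ‖‖θ‖⁻¹ • θ‖ = 1 := norm_smul_inv_norm hθ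
  calc _ ≤ _ := measure_mono hsub
    _ ≤ _ := volume_setOf_inner_mem_and_norm_le_le hE hunit _ L
    _ = _ := by
      rw [Real.volume_Icc, ← sub_div]
      ring_nf

theorem InnerProductSpace.measure_abs_inner_sub_inner_le_le (hE : finrank ℝ E = k + 1)
    {Ω : Type*} [MeasurableSpace Ω] {P : Measure Ω} [IsProbabilityMeasure P] {X Y : Ω → E}
    (hXY : IndepFun X Y P) (hX : Measurable X) (hY : Measurable Y) {ψ : E → ℝ≥0∞} {c : ℝ≥0∞} {L : ℝ}
    (hlaw : P.map Y = volume.withDensity ψ) (hψ : ∀ᵐ x ∂volume, ψ x ≤ c)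
    (hψL : ∀ᵐ x ∂volume, ψ x ≠ 0 → ‖x‖ ≤ L) {θ : E} (hθ : θ ≠ 0) (ε : ℝ) :
    P {ω | |inner ℝ θ (X ω) - inner ℝ θ (Y ω)| ≤ ε}
      ≤ c * (ENNReal.ofReal (2 * ε / ‖θ‖)
        * volume (Metric.closedBall (0 : EuclideanSpace ℝ (Fin k)) L)) := by
  have hT : MeasurableSet {p : E × E | |inner ℝ θ p.1 - inner ℝ θ p.2| ≤ ε} :=
    measurableSet_le (by fun_prop) measurable_const
  refine hXY.measure_preimage_le_of_forall_map_preimage_le hX hY hT fun x ↦ ?_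
  rw [hlaw]
  refine (withDensity_apply_le_mul_measure_inter (K := Metric.closedBall 0 L)
    measurableSet_closedBall hψ (by simpa only [mem_closedBall_zero_iff] using hψL) _).trans
    (mul_le_mul_right ?_ c)
  simpa only [Set.preimage_ofPred_eq, abs_sub_comm] using
    volume_setOf_abs_inner_sub_le_inter_closedBall_le hE hθ (inner ℝ θ x) ε L

end InnerProductSpace

theorem pairwise_separation_probability_bound_general
    (d : ℕ) (hd : 1 ≤ d) (L M ε : ℝ) (hL : 0 < L) (hM : 0 < M) (hε : 0 < ε)
    (θstar : EuclideanSpace ℝ (Fin d)) (hθ : θstar ≠ 0)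
    (n : ℕ)
    {Ω : Type*} [MeasurableSpace Ω] (P : Measure Ω) [IsProbabilityMeasure P]
    (X : Fin n → Ω → EuclideanSpace ℝ (Fin d))
    (hXmeas : ∀ i, Measurable (X i))
    (hindep : ProbabilityTheory.iIndepFun X P)
    (ψ : Fin n → EuclideanSpace ℝ (Fin d) → ℝ≥0∞)
    (hlaw : ∀ i, Measure.map (X i) P
      = (volume : Measure (EuclideanSpace ℝ (Fin d))).withDensity (ψ i))
    (hbound : ∀ i, ∀ᵐ x ∂(volume : Measure (EuclideanSpace ℝ (Fin d))),
        ψ i x ≤ ENNReal.ofReal M)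
    (hsupp : ∀ i, ∀ᵐ x ∂(volume : Measure (EuclideanSpace ℝ (Fin d))),
        ψ i x ≠ 0 → ‖x‖ ≤ L) :
    P {ω | ∃ i j : Fin n, i ≠ j ∧
        |(inner ℝ θstar (X i ω) : ℝ) - (inner ℝ θstar (X j ω) : ℝ)| ≤ ε}
      ≤ ENNReal.ofReal
          ((n : ℝ) ^ 2 * M
            * (Real.pi ^ (((d : ℝ) - 1) / 2) / Real.Gamma (((d : ℝ) + 1) / 2))
            * L ^ (d - 1) * (ε / ‖θstar‖)) := by
  obtain ⟨k, rfl⟩ : ∃ k, d = k + 1 := ⟨d - 1, by omega⟩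
  have hpair (i j : Fin n) (hij : i < j) :=
    InnerProductSpace.measure_abs_inner_sub_inner_le_le finrank_euclideanSpace_fin
      (hindep.indepFun hij.ne) (hXmeas i) (hXmeas j) (hlaw j) (hbound j) (hsupp j) hθ ε
  refine (measure_setOf_exists_ne_le_choose_two_mul P
    (fun i j ↦ {ω | |inner ℝ θstar (X i ω) - inner ℝ θstar (X j ω)| ≤ ε})
    (fun i j ↦ Set.ext fun ω ↦ by simp only [Set.mem_ofPred_eq, abs_sub_comm]) hpair).trans ?_
  set V := Real.pi ^ ((k : ℝ) / 2) / Real.Gamma ((k : ℝ) / 2 + 1)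
  have hchoose : (n.choose 2 : ℝ) * 2 ≤ n ^ 2 := by
    simpa [le_div_iff₀] using Nat.choose_le_pow_div (α := ℝ) 2 n
  rw [EuclideanSpace.volume_closedBall_fin_eq_ofReal k 0 hL.le, Fintype.card_fin,
    ← ENNReal.ofReal_mul (by positivity), ← ENNReal.ofReal_mul hM.le, ← ENNReal.ofReal_natCast,
    ← ENNReal.ofReal_mul (by positivity)]
  refine ENNReal.ofReal_le_ofReal ?_
  have hexp : (((k + 1 : ℕ) : ℝ) - 1) / 2 = (k : ℝ) / 2 := by push_cast; ring
  have hGamma : (((k + 1 : ℕ) : ℝ) + 1) / 2 = (k : ℝ) / 2 + 1 := by push_cast; ring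
  rw [hexp, hGamma, Nat.add_sub_cancel]
  calc (n.choose 2 : ℝ) * (M * (2 * ε / ‖θstar‖ * (V * L ^ k)))
      = (n.choose 2 * 2 : ℝ) * (M * V * L ^ k * (ε / ‖θstar‖)) := by ring
    _ ≤ n ^ 2 * (M * V * L ^ k * (ε / ‖θstar‖)) := by gcongr
    _ = _ := by ring

/-- If `X₁, …, Xₙ` are independent random vectors in `ℝ^d`, each with a density
bounded a.e. by `M` and supported in the closed ball of radius `L`, then the
probability that some pair `i ≠ j` has `|⟨θ*, Xᵢ⟩ - ⟨θ*, Xⱼ⟩| ≤ ε` is at most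
`n² M (π^{(d-1)/2}/Γ((d+1)/2)) L^{d-1} ε/‖θ*‖₂`. -/
theorem pairwise_separation_probability_bound
    (d : ℕ) (hd : 1 ≤ d) (L M ε : ℝ) (hL : 0 < L) (hM : 0 < M) (hε : 0 < ε)
    (θstar : EuclideanSpace ℝ (Fin d)) (hθ : θstar ≠ 0)
    (n : ℕ) (hn : 1 ≤ n)
    {Ω : Type*} [MeasurableSpace Ω] (P : Measure Ω) [IsProbabilityMeasure P]
    (X : Fin n → Ω → EuclideanSpace ℝ (Fin d))
    (hXmeas : ∀ i, Measurable (X i))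
    (hindep : ProbabilityTheory.iIndepFun X P)
    (ψ : Fin n → EuclideanSpace ℝ (Fin d) → ℝ≥0∞)
    (hlaw : ∀ i, Measure.map (X i) P
      = (volume : Measure (EuclideanSpace ℝ (Fin d))).withDensity (ψ i))
    (hbound : ∀ i, ∀ᵐ x ∂(volume : Measure (EuclideanSpace ℝ (Fin d))),
        ψ i x ≤ ENNReal.ofReal M)
    (hsupp : ∀ i, ∀ᵐ x ∂(volume : Measure (EuclideanSpace ℝ (Fin d))),
        ψ i x ≠ 0 → ‖x‖ ≤ L) :
    P {ω | ∃ i j : Fin n, i ≠ j ∧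
        |(inner ℝ θstar (X i ω) : ℝ) - (inner ℝ θstar (X j ω) : ℝ)| ≤ ε}
      ≤ ENNReal.ofReal
          ((n : ℝ) ^ 2 * M
            * (Real.pi ^ (((d : ℝ) - 1) / 2) / Real.Gamma (((d : ℝ) + 1) / 2))
            * L ^ (d - 1) * (ε / ‖θstar‖)) :=
  pairwise_separation_probability_bound_general d hd L M ε hL hM hε θstar hθ n P X hXmeas hindep ψ
    hlaw hbound hsupp
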